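/- arXiv:1906.07476 — 6 statements merged into one kernel-verified Lean document; each statement's English description precedes it below -/
import Mathlib

section
/- Let G be a finite group and 𝔽 : C(G) → C(G) a ℂ-linear map. Then the following are equivalent: (1) 𝔽 is twisted-equivariant, i.e. for all g, h ∈ G and every f ∈ C(G), 𝔽 applied to the function x ↦ f(g⁻¹xh) equals the function x ↦ 𝔽(f)(h⁻¹xg); (2) there exists a class function φ : G → ℂ such that 𝔽(f)(g) = Σ_{h ∈ G} φ(gh)·f(h) for all f ∈ C(G) and all g ∈ G. Moreover, in case (2) the class function φ is unique. -/
/-- For a finite group `G` and a `ℂ`-linear map `𝔽 : C(G) → C(G)`,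
twisted equivariance is equivalent to being given by a convolution kernel
`φ` which is a class function, and such a class function `φ` is unique. -/
theorem braverman_kazhdan_stmt0 {G : Type*} [Group G] [Fintype G]
    (𝔽 : (G → ℂ) →ₗ[ℂ] (G → ℂ)) :
    ((∀ (g h : G) (f : G → ℂ),
        𝔽 (fun x => f (g⁻¹ * x * h)) = fun x => 𝔽 f (h⁻¹ * x * g)) ↔
      (∃ φ : G → ℂ, (∀ x y : G, φ (x * y) = φ (y * x)) ∧
        ∀ (f : G → ℂ) (g : G), 𝔽 f g = ∑ h : G, φ (g * h) * f h)) ∧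
    (∀ φ₁ φ₂ : G → ℂ,
      ((∀ x y : G, φ₁ (x * y) = φ₁ (y * x)) ∧
        ∀ (f : G → ℂ) (g : G), 𝔽 f g = ∑ h : G, φ₁ (g * h) * f h) →
      ((∀ x y : G, φ₂ (x * y) = φ₂ (y * x)) ∧
        ∀ (f : G → ℂ) (g : G), 𝔽 f g = ∑ h : G, φ₂ (g * h) * f h) →
      φ₁ = φ₂) := by
  classical
  set e : G → ℂ := fun x => if (1 : G) = x then 1 else 0 with he
  constructor
  · constructor
    · intro hF
      refine ⟨fun g => 𝔽 e g, ?_, ?_⟩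
      · -- class function property
        have key : ∀ t z : G, 𝔽 e z = 𝔽 e (t⁻¹ * z * t) := by
          intro t z
          have h1 := hF t t e
          have h2 : (fun x => e (t⁻¹ * x * t)) = e := by
            funext w
            have : ((1 : G) = t⁻¹ * w * t) ↔ ((1 : G) = w) := by
              constructor <;> intro h
              · have := congrArg (fun z => t * z * t⁻¹) h
                simpa [mul_assoc] using this
              · simp [← h]
            simp only [he, this]
          rw [h2] at h1
          exact congrFun h1 z
        intro x y
        have := key x (x * y)
        have hx : x⁻¹ * (x * y) * x = y * x := by group
        rw [hx] at this
        exact this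
      · -- convolution formula
        have hδ : ∀ h₀ g : G, 𝔽 (fun x => if h₀ = x then 1 else 0) g = 𝔽 e (h₀ * g) := by
          intro h₀ g
          have h1 := hF 1 h₀⁻¹ e
          have h2 : (fun x => e (1⁻¹ * x * h₀⁻¹)) = fun x => if h₀ = x then (1:ℂ) else 0 := by
            funext w
            have : ((1 : G) = 1⁻¹ * w * h₀⁻¹) ↔ (h₀ = w) := by
              constructor <;> intro h
              · have := congrArg (fun z => z * h₀) h
                simpa [mul_assoc] using this
              · simp [← h]
            simp only [he, this]
          rw [h2] at h1
          have := congrFun h1 g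
          simpa using this
        intro f g
        have hrep : f = ∑ h : G, f h • fun x => if h = x then (1:ℂ) else 0 :=
          pi_eq_sum_univ f
        conv_lhs => rw [hrep]
        rw [map_sum, Finset.sum_apply]
        refine Finset.sum_congr rfl fun h _ => ?_
        rw [map_smul]
        have conj : 𝔽 e (h * g) = 𝔽 e (g * h) := by
          have key := hF g g e
          have h2 : (fun x => e (g⁻¹ * x * g)) = e := by
            funext w
            have : ((1 : G) = g⁻¹ * w * g) ↔ ((1 : G) = w) := by
              constructor <;> intro hh
              · have := congrArg (fun z => g * z * g⁻¹) hh
                simpa [mul_assoc] using this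
              · simp [← hh]
            simp only [he, this]
          rw [h2] at key
          have := congrFun key (g * h)
          rw [this]
          group
        rw [Pi.smul_apply, smul_eq_mul, hδ h g, conj]
        ring
    · -- kernel form implies equivariance
      rintro ⟨φ, hclass, hform⟩ g h₀ f
      funext x
      rw [hform, hform]
      rw [← Equiv.sum_comp ((Equiv.mulLeft g).trans (Equiv.mulRight h₀⁻¹))
        (fun h => φ (x * h) * f (g⁻¹ * h * h₀))]
      refine Finset.sum_congr rfl fun h _ => ?_
      simp only [Equiv.trans_apply, Equiv.coe_mulLeft, Equiv.coe_mulRight]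
      rw [show g⁻¹ * (g * h * h₀⁻¹) * h₀ = h by group]
      congr 1
      rw [show x * (g * h * h₀⁻¹) = (x * g * h) * h₀⁻¹ by group]
      rw [hclass]
      congr 1
      group
  · -- uniqueness
    rintro φ₁ φ₂ ⟨_, h1⟩ ⟨_, h2⟩
    funext g
    have e1 := h1 e g
    have e2 := h2 e g
    have s1 : ∑ h : G, φ₁ (g * h) * e h = φ₁ g := by
      simp [he, mul_ite, eq_comm]
    have s2 : ∑ h : G, φ₂ (g * h) * e h = φ₂ g := by
      simp [he, mul_ite, eq_comm]
    rw [s1] at e1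
    rw [s2] at e2
    rw [← e1, ← e2]
end

section
/- Let G be a finite group and 𝔽 : C(G) → C(G) a twisted-equivariant ℂ-linear map. Then for every irreducible ℂ-character π of G there exists a scalar γ(π) ∈ ℂ such that 𝔽(π) = γ(π)·π^∨, where π^∨ denotes the function g ↦ π(g⁻¹). -/
open CategoryTheory

/-- A twisted-equivariant `ℂ`-linear map `𝔽 : C(G) → C(G)` sends each
irreducible character `π` to a scalar multiple of the dual character `π^∨`. -/
theorem braverman_kazhdan_stmt1 {G : Type} [Group G] [Fintype G]
    (𝔽 : (G → ℂ) →ₗ[ℂ] (G → ℂ))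
    (h𝔽 : ∀ (g h : G) (f : G → ℂ),
      𝔽 (fun x => f (g⁻¹ * x * h)) = fun x => 𝔽 f (h⁻¹ * x * g))
    (V : FDRep ℂ G) (hV : CategoryTheory.Simple V) :
    ∃ γ : ℂ, 𝔽 V.character = fun g => γ * V.character g⁻¹ := by
  classical
  set δ : G → (G → ℂ) := fun g x => if x = g then 1 else 0 with hδ
  set u : G → ℂ := 𝔽 (δ 1) with hu
  -- Step A : 𝔽 (δ g) = fun x => u (x * g)
  have stepA : ∀ g : G, 𝔽 (δ g) = fun x => u (x * g) := by
    intro g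
    have h1 := h𝔽 g 1 (δ 1)
    have h2 : (fun x => δ 1 (g⁻¹ * x * 1)) = δ g := by
      funext x
      have hiff : (g⁻¹ * x * 1 = 1) ↔ (x = g) := by
        rw [mul_one, inv_mul_eq_one, eq_comm]
      simp only [hδ, hiff]
    rw [h2] at h1
    rw [h1]
    funext x
    simp
    rfl
  -- Step B : u (a * b) = u (b * a)
  have stepB : ∀ a b : G, u (a * b) = u (b * a) := by
    intro a b
    have h1 := h𝔽 1 a⁻¹ (δ 1)
    have h2 : (fun x => δ 1 (1⁻¹ * x * a⁻¹)) = δ a := by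
      funext x
      have hiff : (1⁻¹ * x * a⁻¹ = 1) ↔ (x = a) := by
        rw [inv_one, one_mul, mul_inv_eq_one]
      simp only [hδ, hiff]
    rw [h2, stepA a] at h1
    have := congrFun h1 b
    simpa using this.symm
  -- Step C : 𝔽 f is convolution with u
  have stepC : ∀ f : G → ℂ, 𝔽 f = fun x => ∑ g : G, f g * u (x * g) := by
    intro f
    have hf : f = ∑ g : G, f g • δ g := by
      funext x
      simp only [Finset.sum_apply, Pi.smul_apply, hδ, smul_eq_mul, mul_ite, mul_one, mul_zero]
      rw [Finset.sum_ite_eq Finset.univ x f]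
      simp
    conv_lhs => rw [hf]
    rw [map_sum]
    funext x
    simp only [Finset.sum_apply]
    congr 1
    funext g
    rw [map_smul, stepA g]
    simp
  -- Step D : Schur's lemma for T₀ = ∑ u h • ρ h
  set T₀ : V →ₗ[ℂ] V := ∑ h : G, u h • (V.ρ h) with hT₀
  have comm : ∀ g : G, (V.ρ g) * T₀ = T₀ * (V.ρ g) := by
    intro g
    rw [hT₀, Finset.mul_sum, Finset.sum_mul]
    simp only [mul_smul_comm, smul_mul_assoc, ← map_mul]
    rw [← Equiv.sum_comp (Equiv.mulLeft g⁻¹) (fun h => u h • V.ρ (g * h)),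
        ← Equiv.sum_comp (Equiv.mulRight g⁻¹) (fun h => u h • V.ρ (h * g))]
    apply Finset.sum_congr rfl
    intro h _
    simp only [Equiv.coe_mulLeft, Equiv.coe_mulRight, mul_inv_cancel_left,
      inv_mul_cancel_right]
    rw [stepB g⁻¹ h]
  haveI := hV
  set T : V ⟶ V := Action.Hom.mk (FGModuleCat.ofHom T₀ : V.V ⟶ V.V) (fun g => by
    ext v; exact (LinearMap.congr_fun (comm g) v).symm) with hT
  obtain ⟨c, hc⟩ := CategoryTheory.endomorphism_simple_eq_smul_id (𝕜 := ℂ) T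
  have hc' : T₀ = c • LinearMap.id := by
    have := congrArg (fun f => f.hom.hom.hom) hc
    simp only [hT] at this
    exact this.symm
  -- Step E : conclude
  refine ⟨c, ?_⟩
  rw [stepC]
  funext x
  have reindex : ∑ g : G, V.character g * u (x * g)
      = ∑ h : G, u h * V.character (x⁻¹ * h) := by
    rw [← Equiv.sum_comp (Equiv.mulLeft x) (fun h => u h * V.character (x⁻¹ * h))]
    apply Finset.sum_congr rfl
    intro g _
    simp only [Equiv.coe_mulLeft, inv_mul_cancel_left]
    rw [mul_comm]
  rw [reindex]
  have key : ∀ h : G, V.character (x⁻¹ * h)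
      = LinearMap.trace ℂ V ((V.ρ x⁻¹) * (V.ρ h)) := by
    intro h
    rw [FDRep.character, map_mul]
  calc ∑ h : G, u h * V.character (x⁻¹ * h)
      = LinearMap.trace ℂ V ((V.ρ x⁻¹) * T₀) := by
        rw [hT₀, Finset.mul_sum, map_sum]
        apply Finset.sum_congr rfl
        intro h _
        rw [mul_smul_comm, map_smul, key h, smul_eq_mul]
    _ = c * V.character x⁻¹ := by
        rw [hc', mul_smul_comm, map_smul, smul_eq_mul, Module.End.mul_eq_comp, LinearMap.comp_id]
        rfl
end

section
/- Let G be a finite group, 𝔽 : C(G) → C(G) a twisted-equivariant ℂ-linear map, and ρ : G → GL(V) an irreducible complex representation of G with character π, and let γ(π) ∈ ℂ be a scalar such that 𝔽(π) = γ(π)·π^∨ where π^∨(g) = π(g⁻¹). Then for every vector v ∈ V and every linear form v^∨ ∈ V*, 𝔽 sends the matrix coefficient g ↦ v^∨(ρ(g)v) to γ(π) times the function g ↦ v^∨(ρ(g⁻¹)v). -/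
open CategoryTheory Module


/-- A twisted-equivariant map `𝔽` acting by the scalar `γ` on the
irreducible character `π` of a representation `ρ` sends each matrix coefficient
`g ↦ v^∨(ρ(g)v)` to `γ` times `g ↦ v^∨(ρ(g⁻¹)v)`. -/
theorem braverman_kazhdan_stmt4 {G : Type} [Group G] [Fintype G]
    (𝔽 : (G → ℂ) →ₗ[ℂ] (G → ℂ))
    (h𝔽 : ∀ (g h : G) (f : G → ℂ),
      𝔽 (fun x => f (g⁻¹ * x * h)) = fun x => 𝔽 f (h⁻¹ * x * g))
    (V : FDRep ℂ G) (hV : CategoryTheory.Simple V) (γ : ℂ)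
    (hγ : 𝔽 V.character = fun g => γ * V.character g⁻¹)
    (v : V) (v' : Module.Dual ℂ V) :
    𝔽 (fun g => v' (V.ρ g v)) = fun g => γ * v' (V.ρ g⁻¹ v) := by
  classical
  haveI := hV
  have hr : ∀ (a b : G) (w : V), V.ρ a (V.ρ b w) = V.ρ (a * b) w := by
    intro a b w; rw [map_mul]; rfl
  -- The averaged operator `T = ∑ k, π(k) • ρ(k⁻¹)`.
  set T : V →ₗ[ℂ] V := ∑ k : G, V.character k • (V.ρ k⁻¹ : V →ₗ[ℂ] V) with hTdef
  -- `T` commutes with the action.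
  have hTcomm : ∀ g : G, T * V.ρ g = V.ρ g * T := by
    intro g
    rw [hTdef, Finset.sum_mul, Finset.mul_sum]
    refine Fintype.sum_equiv (MulAut.conj g⁻¹).toEquiv _ _ fun k => ?_
    simp only [smul_mul_assoc, mul_smul_comm, MulAut.conj_apply,
      MulEquiv.toEquiv_eq_coe, EquivLike.coe_coe]
    rw [FDRep.char_conj]
    congr 1
    rw [← map_mul, ← map_mul]
    congr 1
    group
  -- Schur's lemma: `T = c • id`.
  obtain ⟨c, hc⟩ : ∃ c : ℂ, T = c • LinearMap.id := by
    let φ : V ⟶ V := ⟨(FGModuleCat.ofHom T : V.V ⟶ V.V), fun g => by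
      ext w; exact LinearMap.congr_fun (hTcomm g) w⟩
    obtain ⟨c, hc⟩ := CategoryTheory.endomorphism_simple_eq_smul_id ℂ φ
    exact ⟨c, by calc T = φ.hom.hom.hom := rfl
                  _ = (c • 𝟙 V).hom.hom.hom := by rw [hc]
                  _ = c • LinearMap.id := rfl⟩
  -- Trace computation: `c * dim V = |G|`, so `c ≠ 0`.
  have hcard : (Fintype.card G : ℂ) ≠ 0 := Nat.cast_ne_zero.mpr Fintype.card_ne_zero
  have htrace : c * (finrank ℂ V : ℂ) = (Fintype.card G : ℂ) := by
    have h1 : LinearMap.trace ℂ V T = ∑ k : G, V.character k * V.character k⁻¹ := by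
      rw [hTdef, map_sum]
      refine Finset.sum_congr rfl fun k _ => ?_
      rw [map_smul, smul_eq_mul]
      rfl
    have h2 : LinearMap.trace ℂ V T = c * (finrank ℂ V : ℂ) := by
      rw [hc, map_smul, LinearMap.trace_id, smul_eq_mul]
    have h3 : ∑ g : G, V.character g * V.character g⁻¹ = (Fintype.card G : ℂ) := by
      have h0 := FDRep.char_orthonormal (k := ℂ) (G := G) V V
      rw [if_pos ⟨Iso.refl V⟩, inv_mul_eq_one₀ (by rw [Nat.card_eq_fintype_card]; exact hcard)] at h0
      rw [← h0, Nat.card_eq_fintype_card]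
    rw [← h2, h1, h3]
  have hcne : c ≠ 0 := by
    intro h
    rw [h, zero_mul] at htrace
    exact hcard htrace.symm
  -- `v'(T w) = c * v'(w)`.
  have hTv : ∀ w : V, ∑ k : G, V.character k * v' (V.ρ k⁻¹ w) = c * v' w := by
    intro w
    have : v' (T w) = c * v' w := by
      rw [hc]; simp
    rw [← this, hTdef]
    simp [LinearMap.sum_apply, map_sum, smul_eq_mul]
  -- Key identity: matrix coefficients against translated characters.
  have key : ∀ x : G, ∑ h : G, V.character (x * h) * v' (V.ρ h⁻¹ v) = c * v' (V.ρ x v) := by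
    intro x
    rw [← hTv (V.ρ x v)]
    refine Fintype.sum_equiv (Equiv.mulLeft x) _ _ fun k => ?_
    simp only [Equiv.coe_mulLeft]
    rw [hr, mul_inv_rev, inv_mul_cancel_right]
  -- Expand the matrix coefficient as a combination of translated characters.
  have expand : (c • fun g => v' (V.ρ g v)) =
      ∑ h : G, v' (V.ρ h⁻¹ v) • (fun x => V.character (x * h)) := by
    funext x
    simp only [Pi.smul_apply, smul_eq_mul, Finset.sum_apply]
    rw [← key x]
    exact Finset.sum_congr rfl fun h _ => mul_comm _ _
  -- Apply `𝔽` to each translated character.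
  have htrans : ∀ h : G, 𝔽 (fun x => V.character (x * h)) =
      fun x => γ * V.character (x⁻¹ * h) := by
    intro h
    have h1 := h𝔽 1 h V.character
    simp only [inv_one, one_mul, mul_one] at h1
    rw [h1, hγ]
    funext x
    group
  -- Put it together.
  have main : c • 𝔽 (fun g => v' (V.ρ g v)) = c • fun g => γ * v' (V.ρ g⁻¹ v) := by
    rw [← map_smul, expand, map_sum]
    funext x
    simp only [Finset.sum_apply, map_smul, Pi.smul_apply, htrans, smul_eq_mul]
    have : ∑ h : G, v' (V.ρ h⁻¹ v) * (γ * V.character (x⁻¹ * h)) =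
        γ * ∑ h : G, V.character (x⁻¹ * h) * v' (V.ρ h⁻¹ v) := by
      rw [Finset.mul_sum]; exact Finset.sum_congr rfl fun h _ => by ring
    rw [this, key x⁻¹]
    ring
  funext g
  have := congrFun main g
  simp only [Pi.smul_apply, smul_eq_mul] at this
  exact mul_left_cancel₀ hcne this
end

section
/- Let F_q be a finite field with q elements, ψ : F_q → ℂˣ a nontrivial additive character, n ≥ 1, and t ∈ F_qˣ. Then Σ_{g ∈ GL_n(F_q), det g = t} ψ(Tr g) = q^{n(n-1)/2} · Σ_{(d_1,…,d_n) ∈ (F_qˣ)^n, d_1⋯d_n = t} ψ(d_1 + ⋯ + d_n). -/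
open scoped Classical

section BK7Aux

variable {F : Type*} [Field F] [Fintype F] {ψ : F → ℂˣ}

private lemma bk7_psi_zero (hψ : ∀ a b : F, ψ (a + b) = ψ a * ψ b) : ψ 0 = 1 := by
  have h := hψ 0 0
  rw [add_zero] at h
  exact (mul_eq_left (a := ψ 0) (b := ψ 0)).mp h.symm

private lemma bk7_psi_sum (hψ : ∀ a b : F, ψ (a + b) = ψ a * ψ b) {ι : Type*}
    (s : Finset ι) (f : ι → F) :
    (ψ (∑ i ∈ s, f i) : ℂ) = ∏ i ∈ s, (ψ (f i) : ℂ) := by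
  induction s using Finset.cons_induction with
  | empty => simp [bk7_psi_zero hψ]
  | cons a s ha ih => rw [Finset.sum_cons, Finset.prod_cons, hψ, Units.val_mul, ih]

private lemma bk7_sum_psi (hψ : ∀ a b : F, ψ (a + b) = ψ a * ψ b)
    (hnt : ∃ a : F, ψ a ≠ 1) : ∑ x : F, (ψ x : ℂ) = 0 := by
  obtain ⟨b, hb⟩ := hnt
  have hb' : (ψ b : ℂ) ≠ 1 := fun h => hb (Units.ext h)
  have h1 : ∑ x : F, (ψ (x + b) : ℂ) = ∑ x : F, (ψ x : ℂ) :=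
    Fintype.sum_equiv (Equiv.addRight b) _ _ (fun x => rfl)
  have h2 : ∑ x : F, (ψ (x + b) : ℂ) = (ψ b : ℂ) * ∑ x : F, (ψ x : ℂ) := by
    rw [Finset.mul_sum]
    exact Finset.sum_congr rfl fun x _ => by rw [hψ, Units.val_mul, mul_comm]
  have key : ((ψ b : ℂ) - 1) * ∑ x : F, (ψ x : ℂ) = 0 := by
    rw [sub_mul, one_mul, ← h2, h1, sub_self]
  rcases mul_eq_zero.mp key with h | h
  · exact absurd (sub_eq_zero.mp h) hb'
  · exact h

private lemma bk7_sum_psi_mul (hψ : ∀ a b : F, ψ (a + b) = ψ a * ψ b)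
    (hnt : ∃ a : F, ψ a ≠ 1) {a : F} (ha : a ≠ 0) :
    ∑ x : F, (ψ (a * x) : ℂ) = 0 := by
  rw [← bk7_sum_psi hψ hnt]
  exact Fintype.sum_equiv (Equiv.mulLeft₀ a ha) _ _ (fun x => rfl)

end BK7Aux

private lemma bk7_card_lt (n : ℕ) :
    (Finset.univ.filter (fun p : Fin n × Fin n => p.1 < p.2)).card = n * (n - 1) / 2 := by
  rw [Finset.card_filter, Fintype.sum_prod_type_right]
  have h1 : ∀ j : Fin n, (∑ i : Fin n, if i < j then (1:ℕ) else 0) = (j : ℕ) := by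
    intro j
    rw [← Finset.card_filter]
    have : Finset.univ.filter (fun i : Fin n => i < j) = Finset.Iio j := by ext i; simp
    rw [this, Fin.card_Iio]
  simp only [h1]
  have h2 : (∑ j : Fin n, (j : ℕ)) = ∑ i ∈ Finset.range n, i :=
    Fin.sum_univ_eq_sum_range (fun i => i) n
  have h3 := Finset.sum_range_id_mul_two n
  omega

private def bk7s {F : Type*} [Field F] (n : ℕ) (c : Fin n × Fin n → F) :
    Matrix (Fin n) (Fin n) F :=
  Matrix.of fun i j => if i < j then c (i, j) else 0

private def bk7u {F : Type*} [Field F] (n : ℕ) (c : Fin n × Fin n → F) :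
    Matrix (Fin n) (Fin n) F := 1 + bk7s n c

private lemma bk7u_BT {F : Type*} [Field F] {n : ℕ} (c : Fin n × Fin n → F) :
    (bk7u n c).BlockTriangular id := by
  apply Matrix.blockTriangular_one.add
  intro i j h
  simp only [bk7s, Matrix.of_apply]
  exact if_neg (by exact fun h' => absurd (h.trans h') (lt_irrefl _))

private lemma bk7u_det {F : Type*} [Field F] {n : ℕ} (c : Fin n × Fin n → F) :
    (bk7u n c).det = 1 := by
  rw [Matrix.det_of_upperTriangular (bk7u_BT c)]
  have : ∀ i : Fin n, bk7u n c i i = 1 := by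
    intro i
    simp [bk7u, bk7s, Matrix.one_apply_eq]
  simp [this]

private lemma bk7_trace_mul {F : Type*} [Field F] {n : ℕ} (M : Matrix (Fin n) (Fin n) F)
    (c : Fin n × Fin n → F) :
    (M * bk7u n c).trace =
      M.trace + ∑ p : Fin n × Fin n, (if p.1 < p.2 then M p.2 p.1 else 0) * c p := by
  rw [bk7u, mul_add, mul_one, Matrix.trace_add]
  congr 1
  rw [Matrix.trace]
  simp only [Matrix.diag_apply, Matrix.mul_apply, bk7s, Matrix.of_apply]
  rw [Finset.sum_comm, Fintype.sum_prod_type]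
  refine Finset.sum_congr rfl fun k _ => Finset.sum_congr rfl fun i _ => ?_
  by_cases h : k < i
  · simp [h]
  · simp [h]

/-- For a nontrivial additive character `ψ` of a finite field `F_q`,
`n ≥ 1` and `t ∈ F_qˣ`,
`Σ_{g ∈ GL_n(F_q), det g = t} ψ(Tr g)
  = q^{n(n-1)/2} · Σ_{d ∈ (F_qˣ)^n, d_1⋯d_n = t} ψ(d_1 + ⋯ + d_n)`. -/
theorem braverman_kazhdan_stmt7 {F : Type*} [Field F] [Fintype F]
    (ψ : F → ℂˣ) (hψ : ∀ a b : F, ψ (a + b) = ψ a * ψ b)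
    (hnt : ∃ a : F, ψ a ≠ 1)
    (n : ℕ) (hn : 1 ≤ n) (t : Fˣ) :
    ∑ g ∈ Finset.univ.filter
        (fun g : GL (Fin n) F => Matrix.det (g : Matrix (Fin n) (Fin n) F) = (t : F)),
      (ψ (Matrix.trace (g : Matrix (Fin n) (Fin n) F)) : ℂ) =
    (Fintype.card F : ℂ) ^ (n * (n - 1) / 2) *
      ∑ d ∈ Finset.univ.filter (fun d : Fin n → Fˣ => ∏ i, d i = t),
        (ψ (∑ i, (d i : F)) : ℂ) := by
  classical
  set q : ℕ := Fintype.card F with hq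
  set D : Finset (Matrix (Fin n) (Fin n) F) :=
    Finset.univ.filter (fun M : Matrix (Fin n) (Fin n) F => M.det = (t : F)) with hD
  set T : ℂ := ∑ M ∈ D, (ψ M.trace : ℂ) with hT
  have hudet : ∀ c : Fin n × Fin n → F, IsUnit (bk7u (F := F) n c).det := by
    intro c; rw [bk7u_det]; exact isUnit_one
  -- Step 1: the sum over `GL n` equals the sum over matrices of determinant `t`.
  have step1 : ∑ g ∈ Finset.univ.filter
        (fun g : GL (Fin n) F => Matrix.det (g : Matrix (Fin n) (Fin n) F) = (t : F)),
      (ψ (Matrix.trace (g : Matrix (Fin n) (Fin n) F)) : ℂ) = T := by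
    rw [hT]
    refine Finset.sum_nbij' (fun g : GL (Fin n) F => (g : Matrix (Fin n) (Fin n) F))
      (fun M => if h : IsUnit M then h.unit else 1) ?_ ?_ ?_ ?_ ?_
    · intro g hg
      rw [Finset.mem_filter] at hg
      rw [hD, Finset.mem_filter]
      exact ⟨Finset.mem_univ _, hg.2⟩
    · intro M hM
      rw [hD, Finset.mem_filter] at hM
      have hu : IsUnit M := (Matrix.isUnit_iff_isUnit_det M).mpr
        (by rw [hM.2]; exact isUnit_iff_ne_zero.mpr t.ne_zero)
      rw [Finset.mem_filter]
      refine ⟨Finset.mem_univ _, ?_⟩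
      simp only [dif_pos hu]
      show Matrix.det ((hu.unit : Matrix (Fin n) (Fin n) F)) = (t : F)
      rw [hu.unit_spec]
      exact hM.2
    · intro g _
      have hu : IsUnit (g : Matrix (Fin n) (Fin n) F) := g.isUnit
      simp only [dif_pos hu]
      exact Units.ext hu.unit_spec
    · intro M hM
      rw [hD, Finset.mem_filter] at hM
      have hu : IsUnit M := (Matrix.isUnit_iff_isUnit_det M).mpr
        (by rw [hM.2]; exact isUnit_iff_ne_zero.mpr t.ne_zero)
      simp only [dif_pos hu]
      exact hu.unit_spec
    · intro g _
      rfl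
  -- Step 2: invariance of the sum under right multiplication by a unipotent matrix.
  have step2 : ∀ c : Fin n × Fin n → F,
      ∑ M ∈ D, (ψ (M * bk7u n c).trace : ℂ) = T := by
    intro c
    refine Finset.sum_nbij' (fun M => M * bk7u n c) (fun M => M * (bk7u n c)⁻¹) ?_ ?_ ?_ ?_ ?_
    · intro M hM
      rw [hD, Finset.mem_filter] at hM ⊢
      refine ⟨Finset.mem_univ _, ?_⟩
      rw [Matrix.det_mul, bk7u_det, mul_one]; exact hM.2
    · intro M hM
      rw [hD, Finset.mem_filter] at hM ⊢
      refine ⟨Finset.mem_univ _, ?_⟩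
      have h1 : M * (bk7u n c)⁻¹ * bk7u n c = M :=
        Matrix.nonsing_inv_mul_cancel_right _ _ (hudet c)
      have := congrArg Matrix.det h1
      rw [Matrix.det_mul, bk7u_det, mul_one] at this
      rw [this]; exact hM.2
    · intro M _; exact Matrix.mul_nonsing_inv_cancel_right _ _ (hudet c)
    · intro M _; exact Matrix.nonsing_inv_mul_cancel_right _ _ (hudet c)
    · intro M _; rfl
  -- Step 3: the inner character sum over all unipotent matrices.
  have step3 : ∀ M ∈ D,
      ∑ c : Fin n × Fin n → F, (ψ (M * bk7u n c).trace : ℂ) =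
        (ψ M.trace : ℂ) * (if M.BlockTriangular id then (q : ℂ) ^ (n * n) else 0) := by
    intro M _
    have expand : ∀ c : Fin n × Fin n → F,
        (ψ (M * bk7u n c).trace : ℂ) =
          (ψ M.trace : ℂ) *
            ∏ p : Fin n × Fin n, (ψ ((if p.1 < p.2 then M p.2 p.1 else 0) * c p) : ℂ) := by
      intro c
      rw [bk7_trace_mul, hψ, Units.val_mul, bk7_psi_sum hψ]
    simp only [expand]
    rw [← Finset.mul_sum]
    congr 1
    rw [← Fintype.prod_sum (f := fun (p : Fin n × Fin n) (x : F) =>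
      (ψ ((if p.1 < p.2 then M p.2 p.1 else 0) * x) : ℂ))]
    by_cases hBT : M.BlockTriangular id
    · rw [if_pos hBT]
      have hfac : ∀ p : Fin n × Fin n,
          (∑ x : F, (ψ ((if p.1 < p.2 then M p.2 p.1 else 0) * x) : ℂ)) = (q : ℂ) := by
        intro p
        have hzero : (if p.1 < p.2 then M p.2 p.1 else 0) = 0 := by
          by_cases h : p.1 < p.2
          · rw [if_pos h]; exact hBT h
          · rw [if_neg h]
        rw [hzero]
        simp only [zero_mul, bk7_psi_zero hψ, Units.val_one]
        rw [Finset.sum_const, Finset.card_univ, nsmul_eq_mul, mul_one]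
      rw [Finset.prod_congr rfl (fun p _ => hfac p), Finset.prod_const]
      rw [Finset.card_univ, Fintype.card_prod, Fintype.card_fin]
    · rw [if_neg hBT]
      simp only [Matrix.BlockTriangular, id] at hBT
      push_neg at hBT
      obtain ⟨i, j, hji, hMij⟩ := hBT
      refine Finset.prod_eq_zero (Finset.mem_univ ((j, i) : Fin n × Fin n)) ?_
      have h1 : ((if (j,i).1 < (j,i).2 then M (j,i).2 (j,i).1 else 0)) = M i j := if_pos hji
      rw [show (fun x => (ψ ((if (j,i).1 < (j,i).2 then M (j,i).2 (j,i).1 else 0) * x) : ℂ))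
          = fun x => (ψ (M i j * x) : ℂ) by funext x; rw [h1]]
      exact bk7_sum_psi_mul hψ hnt hMij
  -- Step 4: averaging over all unipotent matrices.
  have hcardC : Fintype.card (Fin n × Fin n → F) = q ^ (n * n) := by
    rw [Fintype.card_fun]
    congr 1
    rw [Fintype.card_prod, Fintype.card_fin]
  have step4 : (q : ℂ) ^ (n * n) * T =
      (q : ℂ) ^ (n * n) * ∑ M ∈ D.filter (fun M => M.BlockTriangular id), (ψ M.trace : ℂ) := by
    calc (q : ℂ) ^ (n * n) * T = ∑ _c : Fin n × Fin n → F, T := by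
          rw [Finset.sum_const, Finset.card_univ, hcardC, nsmul_eq_mul, Nat.cast_pow]
      _ = ∑ c : Fin n × Fin n → F, ∑ M ∈ D, (ψ (M * bk7u n c).trace : ℂ) :=
          Finset.sum_congr rfl fun c _ => (step2 c).symm
      _ = ∑ M ∈ D, ∑ c : Fin n × Fin n → F, (ψ (M * bk7u n c).trace : ℂ) := Finset.sum_comm
      _ = ∑ M ∈ D, (ψ M.trace : ℂ) * (if M.BlockTriangular id then (q : ℂ) ^ (n * n) else 0) :=
          Finset.sum_congr rfl step3
      _ = ∑ M ∈ D, (q : ℂ) ^ (n * n) * (if M.BlockTriangular id then (ψ M.trace : ℂ) else 0) := by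
          refine Finset.sum_congr rfl fun M _ => ?_
          by_cases h : M.BlockTriangular id <;> simp [h, mul_comm]
      _ = (q : ℂ) ^ (n * n) *
            ∑ M ∈ D.filter (fun M => M.BlockTriangular id), (ψ M.trace : ℂ) := by
          rw [← Finset.mul_sum]
          congr 1
          exact (Finset.sum_filter _ _).symm
  have hqne : (q : ℂ) ≠ 0 := by
    simp only [hq, Ne, Nat.cast_eq_zero]
    exact Fintype.card_ne_zero
  have step5 : T = ∑ M ∈ D.filter (fun M => M.BlockTriangular id), (ψ M.trace : ℂ) :=
    mul_left_cancel₀ (pow_ne_zero _ hqne) step4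
  -- Step 6: parametrizing the invertible upper triangular matrices.
  have step6 : ∑ M ∈ D.filter (fun M => M.BlockTriangular id), (ψ M.trace : ℂ) =
      (q : ℂ) ^ (n * (n - 1) / 2) *
        ∑ d ∈ Finset.univ.filter (fun d : Fin n → Fˣ => ∏ i, d i = t),
          (ψ (∑ i, (d i : F)) : ℂ) := by
    have hcardP : Fintype.card {p : Fin n × Fin n // p.1 < p.2} = n * (n - 1) / 2 := by
      rw [Fintype.card_subtype]; exact bk7_card_lt n
    set Φ : (Fin n → Fˣ) × ({p : Fin n × Fin n // p.1 < p.2} → F) → Matrix (Fin n) (Fin n) F :=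
      fun dc => Matrix.of fun i j =>
        if i = j then (dc.1 i : F) else if h2 : i < j then dc.2 ⟨(i, j), h2⟩ else 0 with hΦ
    have hdiag : ∀ dc, ∀ i, Φ dc i i = (dc.1 i : F) := by
      intro dc i; simp [hΦ]
    have htrace : ∀ dc, (Φ dc).trace = ∑ i, (dc.1 i : F) := by
      intro dc
      rw [Matrix.trace]
      exact Finset.sum_congr rfl fun i _ => hdiag dc i
    have hBT : ∀ dc, (Φ dc).BlockTriangular id := by
      intro dc i j hji
      simp only [hΦ, Matrix.of_apply]
      rw [if_neg (by exact fun h => absurd (h ▸ hji) (lt_irrefl _))]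
      exact dif_neg (asymm hji)
    have hdet : ∀ dc, (Φ dc).det = ((∏ i, dc.1 i : Fˣ) : F) := by
      intro dc
      rw [Matrix.det_of_upperTriangular (hBT dc)]
      rw [Finset.prod_congr rfl (fun i _ => hdiag dc i)]
      exact (map_prod (Units.coeHom F) _ _).symm
    have key : ∑ dc ∈ Finset.univ.filter
        (fun dc : (Fin n → Fˣ) × ({p : Fin n × Fin n // p.1 < p.2} → F) => ∏ i, dc.1 i = t),
        (ψ (∑ i, (dc.1 i : F)) : ℂ) =
        ∑ M ∈ D.filter (fun M => M.BlockTriangular id), (ψ M.trace : ℂ) := by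
      refine Finset.sum_nbij' Φ
        (fun M => (fun i => if h : M i i = 0 then 1 else Units.mk0 (M i i) h,
                   fun p => M p.1.1 p.1.2)) ?_ ?_ ?_ ?_ ?_
      · intro dc hdc
        rw [Finset.mem_filter] at hdc
        rw [Finset.mem_filter, hD, Finset.mem_filter]
        refine ⟨⟨Finset.mem_univ _, ?_⟩, hBT dc⟩
        rw [hdet dc, hdc.2]
      · intro M hM
        rw [Finset.mem_filter, hD, Finset.mem_filter] at hM
        obtain ⟨⟨-, hdetM⟩, hMBT⟩ := hM
        have hprod : (∏ i, M i i) = (t : F) := by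
          rw [← Matrix.det_of_upperTriangular hMBT, hdetM]
        have hne : ∀ i, M i i ≠ 0 := by
          intro i
          have : (∏ i, M i i) ≠ 0 := by rw [hprod]; exact t.ne_zero
          exact fun h => this (Finset.prod_eq_zero (Finset.mem_univ i) h)
        rw [Finset.mem_filter]
        refine ⟨Finset.mem_univ _, ?_⟩
        apply Units.ext
        have hcoe : ∀ f : Fin n → Fˣ, ((∏ i, f i : Fˣ) : F) = ∏ i, (f i : F) := by
          intro f
          simpa using map_prod (Units.coeHom F) f Finset.univ
        rw [hcoe]
        rw [Finset.prod_congr rfl (fun i _ => ?_ : ∀ i ∈ Finset.univ,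
          ((if h : M i i = 0 then 1 else Units.mk0 (M i i) h : Fˣ) : F) = M i i)]
        · exact hprod
        · rw [dif_neg (hne i)]
          rfl
      · intro dc hdc
        refine Prod.ext ?_ ?_
        · funext i
          simp only
          rw [dif_neg (by rw [hdiag dc i]; exact Units.ne_zero _)]
          apply Units.ext
          rw [Units.val_mk0, hdiag dc i]
        · funext p
          simp only
          obtain ⟨⟨a, b⟩, hab⟩ := p
          simp only [hΦ, Matrix.of_apply]
          rw [if_neg (ne_of_lt hab), dif_pos hab]
      · intro M hM
        rw [Finset.mem_filter, hD, Finset.mem_filter] at hM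
        obtain ⟨⟨-, hdetM⟩, hMBT⟩ := hM
        have hprod : (∏ i, M i i) = (t : F) := by
          rw [← Matrix.det_of_upperTriangular hMBT, hdetM]
        have hne : ∀ i, M i i ≠ 0 := by
          intro i
          have : (∏ i, M i i) ≠ 0 := by rw [hprod]; exact t.ne_zero
          exact fun h => this (Finset.prod_eq_zero (Finset.mem_univ i) h)
        funext i j
        simp only [hΦ, Matrix.of_apply]
        rcases lt_trichotomy i j with h | h | h
        · rw [if_neg (ne_of_lt h), dif_pos h]
        · subst h
          rw [if_pos rfl, dif_neg (hne i), Units.val_mk0]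
        · rw [if_neg (ne_of_gt h), dif_neg (asymm h)]
          exact (hMBT h).symm
      · intro dc hdc
        rw [htrace dc]
    rw [← key, Finset.sum_filter, Fintype.sum_prod_type]
    have hconst : ∀ d : Fin n → Fˣ,
        (∑ _c : {p : Fin n × Fin n // p.1 < p.2} → F,
          (if (∏ i, d i) = t then (ψ (∑ i, (d i : F)) : ℂ) else 0)) =
        (q : ℂ) ^ (n * (n - 1) / 2) *
          (if (∏ i, d i) = t then (ψ (∑ i, (d i : F)) : ℂ) else 0) := by
      intro d
      rw [Finset.sum_const, Finset.card_univ, Fintype.card_fun, hcardP, nsmul_eq_mul, Nat.cast_pow]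
    simp only [hconst]
    rw [← Finset.mul_sum, ← Finset.sum_filter]
  rw [step1, step5, step6, hq]
end

section
/- Let F_q be a finite field with q elements, ψ : F_q → ℂˣ a nontrivial additive character, n ≥ 1, and t ∈ F_qˣ. Then Σ ψ(Tr g) = 0, where the sum runs over all g ∈ GL_n(F_q) with det g = t that are not upper triangular, i.e. that have g_{ji} ≠ 0 for some i < j. -/
open scoped Classical
open Matrix Finset

private lemma bk9_psi_zero {F : Type*} [Field F] (ψ : F → ℂˣ)
    (hψ : ∀ a b : F, ψ (a + b) = ψ a * ψ b) : ψ 0 = 1 := by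
  have h := hψ 0 0
  rw [add_zero] at h
  exact (mul_eq_right.mp h.symm)

private lemma bk9_sum_psi {F : Type*} [Field F] [Fintype F] (ψ : F → ℂˣ)
    (hψ : ∀ a b : F, ψ (a + b) = ψ a * ψ b) (hnt : ∃ a : F, ψ a ≠ 1) :
    ∑ c : F, (ψ c : ℂ) = 0 := by
  obtain ⟨b, hb⟩ := hnt
  have h1 : (ψ b : ℂ) * ∑ c : F, (ψ c : ℂ) = ∑ c : F, (ψ c : ℂ) := by
    rw [Finset.mul_sum, ← Equiv.sum_comp (Equiv.addLeft b) (fun c => (ψ c : ℂ))]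
    refine Finset.sum_congr rfl fun c _ => ?_
    simp [Equiv.coe_addLeft, hψ]
  have hb' : (ψ b : ℂ) ≠ 1 := by
    intro h; exact hb (Units.ext (by simpa using h))
  have h2 : ((ψ b : ℂ) - 1) * ∑ c : F, (ψ c : ℂ) = 0 := by
    rw [sub_mul, one_mul, h1, sub_self]
  rcases mul_eq_zero.mp h2 with h | h
  · exact absurd (by linear_combination h) hb'
  · exact h

private lemma bk9_sum_psi_mul {F : Type*} [Field F] [Fintype F] (ψ : F → ℂˣ)
    (hψ : ∀ a b : F, ψ (a + b) = ψ a * ψ b) (hnt : ∃ a : F, ψ a ≠ 1)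
    {a : F} (ha : a ≠ 0) : ∑ c : F, (ψ (c * a) : ℂ) = 0 := by
  have := Equiv.sum_comp (Equiv.mulRight₀ a ha) (fun c => (ψ c : ℂ))
  simp only [Equiv.mulRight₀_apply] at this
  rw [this]
  exact bk9_sum_psi ψ hψ hnt

private noncomputable def bkW {F : Type*} [Field F] {n : ℕ} (M : Matrix (Fin n) (Fin n) F) :
    Finset (Fin n × Fin n) :=
  Finset.univ.filter fun p => p.1 < p.2 ∧ M p.2 p.1 ≠ 0

private def bkey {n : ℕ} (p : Fin n × Fin n) : ℕ := (p.2 : ℕ) * n + (p.1 : ℕ)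

private lemma bkey_inj {n : ℕ} {p q : Fin n × Fin n} (h : bkey p = bkey q) : p = q := by
  unfold bkey at h
  have h1 : (p.1 : ℕ) < n := p.1.isLt
  have h2 : (q.1 : ℕ) < n := q.1.isLt
  have hj : (p.2 : ℕ) = (q.2 : ℕ) := by
    rcases lt_trichotomy (p.2 : ℕ) (q.2 : ℕ) with hlt | he | hgt
    · nlinarith
    · exact he
    · nlinarith
  have hi : (p.1 : ℕ) = (q.1 : ℕ) := by rw [hj] at h; omega
  exact Prod.ext (Fin.ext hi) (Fin.ext hj)

private lemma bkey_le {n : ℕ} {p q : Fin n × Fin n} (h : bkey p ≤ bkey q) :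
    (p.2 : ℕ) ≤ (q.2 : ℕ) := by
  unfold bkey at h
  have h1 : (p.1 : ℕ) < n := p.1.isLt
  have h2 : (q.1 : ℕ) < n := q.1.isLt
  by_contra hgt
  push_neg at hgt
  have : ((q.2 : ℕ) + 1) * n ≤ (p.2 : ℕ) * n := Nat.mul_le_mul_right n (Nat.succ_le_of_lt hgt)
  nlinarith

private noncomputable def bkK {F : Type*} [Field F] {n : ℕ}
    (M : Matrix (Fin n) (Fin n) F) : ℕ :=
  if h : (bkW M).Nonempty then ((bkW M).image bkey).min' (h.image _) else 0

private lemma bkK_le {F : Type*} [Field F] {n : ℕ} {M : Matrix (Fin n) (Fin n) F}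
    (hW : (bkW M).Nonempty) {q : Fin n × Fin n} (hq : q ∈ bkW M) : bkK M ≤ bkey q := by
  rw [bkK, dif_pos hW]
  exact Finset.min'_le _ _ (Finset.mem_image_of_mem _ hq)

private lemma bkK_exists {F : Type*} [Field F] {n : ℕ} {M : Matrix (Fin n) (Fin n) F}
    (hW : (bkW M).Nonempty) : ∃ p, p ∈ bkW M ∧ bkey p = bkK M := by
  rw [bkK, dif_pos hW]
  obtain ⟨p, hp, hpe⟩ := Finset.mem_image.mp (Finset.min'_mem ((bkW M).image bkey) (hW.image _))
  exact ⟨p, hp, hpe⟩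

private noncomputable def bkPick {F : Type*} [Field F] {n : ℕ} (hn : 0 < n)
    (M : Matrix (Fin n) (Fin n) F) : Fin n × Fin n :=
  if h : ∃ p, p ∈ bkW M ∧ bkey p = bkK M then h.choose else (⟨0, hn⟩, ⟨0, hn⟩)

private lemma bkPick_spec {F : Type*} [Field F] {n : ℕ} (hn : 0 < n)
    {M : Matrix (Fin n) (Fin n) F} (hW : (bkW M).Nonempty) :
    bkPick hn M ∈ bkW M ∧ bkey (bkPick hn M) = bkK M := by
  have h := bkK_exists hW
  rw [bkPick, dif_pos h]
  exact h.choose_spec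

private lemma bk_mem_iff {F : Type*} [Field F] {n : ℕ} (hn : 0 < n)
    {M : Matrix (Fin n) (Fin n) F} (hW : (bkW M).Nonempty) (c : F)
    {q : Fin n × Fin n} (hq : bkey q ≤ bkK M) :
    q ∈ bkW (M * Matrix.transvection (bkPick hn M).1 (bkPick hn M).2 c) ↔ q ∈ bkW M := by
  obtain ⟨hpW, hpk⟩ := bkPick_spec hn hW
  have hj2 : (q.2 : ℕ) ≤ ((bkPick hn M).2 : ℕ) := bkey_le (hpk ▸ hq)
  have key : q.1 < q.2 → (M * Matrix.transvection (bkPick hn M).1 (bkPick hn M).2 c) q.2 q.1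
      = M q.2 q.1 := by
    intro h12
    refine Matrix.mul_transvection_apply_of_ne _ _ _ _ ?_ _ _
    intro hcontra
    have : ((bkPick hn M).2 : ℕ) < (q.2 : ℕ) := by
      rw [← hcontra]; exact h12
    omega
  simp only [bkW, Finset.mem_filter, Finset.mem_univ, true_and]
  constructor
  · rintro ⟨h12, hne⟩
    exact ⟨h12, by rwa [key h12] at hne⟩
  · rintro ⟨h12, hne⟩
    exact ⟨h12, by rwa [key h12]⟩

private lemma bkPick_mul {F : Type*} [Field F] {n : ℕ} (hn : 0 < n)
    {M : Matrix (Fin n) (Fin n) F} (hW : (bkW M).Nonempty) (c : F) :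
    (bkW (M * Matrix.transvection (bkPick hn M).1 (bkPick hn M).2 c)).Nonempty ∧
    bkPick hn (M * Matrix.transvection (bkPick hn M).1 (bkPick hn M).2 c) = bkPick hn M := by
  obtain ⟨hpW, hpk⟩ := bkPick_spec hn hW
  set N := M * Matrix.transvection (bkPick hn M).1 (bkPick hn M).2 c with hN
  have hpN : bkPick hn M ∈ bkW N := (bk_mem_iff hn hW c (le_of_eq hpk)).mpr hpW
  have hWN : (bkW N).Nonempty := ⟨_, hpN⟩
  have hKeq : bkK N = bkK M := by
    have h1 : bkK N ≤ bkK M := hpk ▸ bkK_le hWN hpN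
    obtain ⟨r, hrN, hrk⟩ := bkK_exists hWN
    have hrM : r ∈ bkW M := (bk_mem_iff hn hW c (by omega)).mp hrN
    have := bkK_le hW hrM
    omega
  obtain ⟨hpW', hpk'⟩ := bkPick_spec hn hWN
  refine ⟨hWN, bkey_inj ?_⟩
  rw [hpk', hpk, hKeq]

private lemma bk_trace {F : Type*} [Field F] {n : ℕ} (M : Matrix (Fin n) (Fin n) F)
    {i j : Fin n} (hij : i ≠ j) (c : F) :
    Matrix.trace (M * Matrix.transvection i j c) = Matrix.trace M + c * M j i := by
  have h : ∀ k, (M * Matrix.transvection i j c) k k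
      = M k k + (if k = j then c * M j i else 0) := by
    intro k
    by_cases hk : k = j
    · subst hk; rw [Matrix.mul_transvection_apply_same]; simp
    · rw [Matrix.mul_transvection_apply_of_ne _ _ _ _ hk]; simp [hk]
  simp only [Matrix.trace, Matrix.diag]
  rw [Finset.sum_congr rfl (fun k _ => h k), Finset.sum_add_distrib,
    Finset.sum_ite_eq' Finset.univ j (fun _ => c * M j i)]
  simp

private lemma bk_step {F : Type*} [Field F] {n : ℕ} (hn : 0 < n) (t : Fˣ)
    {M : Matrix (Fin n) (Fin n) F}
    (hM : M.det = (t : F) ∧ ∃ i j : Fin n, i < j ∧ M j i ≠ 0) (c : F) :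
    ((M * Matrix.transvection (bkPick hn M).1 (bkPick hn M).2 c).det = (t : F) ∧
      ∃ i j : Fin n, i < j ∧
        (M * Matrix.transvection (bkPick hn M).1 (bkPick hn M).2 c) j i ≠ 0) ∧
    (M * Matrix.transvection (bkPick hn M).1 (bkPick hn M).2 c) *
      Matrix.transvection
        (bkPick hn (M * Matrix.transvection (bkPick hn M).1 (bkPick hn M).2 c)).1
        (bkPick hn (M * Matrix.transvection (bkPick hn M).1 (bkPick hn M).2 c)).2 (-c) = M ∧
    Matrix.trace (M * Matrix.transvection (bkPick hn M).1 (bkPick hn M).2 c)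
      = Matrix.trace M + c * M (bkPick hn M).2 (bkPick hn M).1 ∧
    M (bkPick hn M).2 (bkPick hn M).1 ≠ 0 := by
  obtain ⟨hdet, i0, j0, hij0, hne0⟩ := hM
  have hW : (bkW M).Nonempty :=
    ⟨(i0, j0), by simp [bkW, hij0, hne0]⟩
  obtain ⟨hpW, _⟩ := bkPick_spec hn hW
  rw [bkW, Finset.mem_filter] at hpW
  obtain ⟨-, hplt, hpne⟩ := hpW
  have hpne' : (bkPick hn M).1 ≠ (bkPick hn M).2 := ne_of_lt hplt
  obtain ⟨hWN, hpickN⟩ := bkPick_mul hn hW c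
  have hentry : (M * Matrix.transvection (bkPick hn M).1 (bkPick hn M).2 c)
      (bkPick hn M).2 (bkPick hn M).1 = M (bkPick hn M).2 (bkPick hn M).1 :=
    Matrix.mul_transvection_apply_of_ne _ _ _ _ hpne' _ _
  refine ⟨⟨?_, (bkPick hn M).1, (bkPick hn M).2, hplt, by rwa [hentry]⟩, ?_, ?_, hpne⟩
  · rw [Matrix.det_mul, Matrix.det_transvection_of_ne _ _ hpne', mul_one, hdet]
  · rw [hpickN, mul_assoc, Matrix.transvection_mul_transvection_same _ _ hpne',
      add_neg_cancel, Matrix.transvection_zero, mul_one]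
  · exact bk_trace M hpne' c

/-- For a nontrivial additive character `ψ` of `F_q`, `n ≥ 1` and
`t ∈ F_qˣ`, the sum of `ψ(Tr g)` over all `g ∈ GL_n(F_q)` with `det g = t` that
are not upper triangular (i.e. `g_{ji} ≠ 0` for some `i < j`) vanishes. -/
theorem braverman_kazhdan_stmt9 {F : Type*} [Field F] [Fintype F]
    (ψ : F → ℂˣ) (hψ : ∀ a b : F, ψ (a + b) = ψ a * ψ b)
    (hnt : ∃ a : F, ψ a ≠ 1)
    (n : ℕ) (hn : 1 ≤ n) (t : Fˣ) :
    ∑ g ∈ Finset.univ.filter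
        (fun g : GL (Fin n) F =>
          Matrix.det (g : Matrix (Fin n) (Fin n) F) = (t : F) ∧
          ∃ i j : Fin n, i < j ∧ (g : Matrix (Fin n) (Fin n) F) j i ≠ 0),
      (ψ (Matrix.trace (g : Matrix (Fin n) (Fin n) F)) : ℂ) = 0 := by
  have hn0 : 0 < n := hn
  set P : Matrix (Fin n) (Fin n) F → Prop :=
    fun M => M.det = (t : F) ∧ ∃ i j : Fin n, i < j ∧ M j i ≠ 0 with hP
  set S' : Finset (Matrix (Fin n) (Fin n) F) := Finset.univ.filter P with hS'
  -- Step 1: transfer the sum from GL to matrices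
  have hstep : ∑ g ∈ Finset.univ.filter
        (fun g : GL (Fin n) F =>
          Matrix.det (g : Matrix (Fin n) (Fin n) F) = (t : F) ∧
          ∃ i j : Fin n, i < j ∧ (g : Matrix (Fin n) (Fin n) F) j i ≠ 0),
      (ψ (Matrix.trace (g : Matrix (Fin n) (Fin n) F)) : ℂ)
      = ∑ M ∈ S', (ψ (Matrix.trace M) : ℂ) := by
    refine Finset.sum_bij (fun g _ => (g : Matrix (Fin n) (Fin n) F)) ?_ ?_ ?_ ?_
    · intro g hg
      simp only [Finset.mem_filter, Finset.mem_univ, true_and] at hg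
      simp only [hS', hP, Finset.mem_filter, Finset.mem_univ, true_and]
      exact hg
    · intro g₁ h₁ g₂ h₂ h
      exact Units.ext h
    · intro M hM
      simp only [hS', hP, Finset.mem_filter, Finset.mem_univ, true_and] at hM
      have hu : IsUnit M := (Matrix.isUnit_iff_isUnit_det M).mpr (by rw [hM.1]; exact t.isUnit)
      obtain ⟨u, hu⟩ := hu
      refine ⟨u, ?_, hu⟩
      simp only [Finset.mem_filter, Finset.mem_univ, true_and, hu]
      exact hM
    · intro g hg; rfl
  rw [hstep]
  -- Step 2: show the matrix sum vanishes
  have hq : (Fintype.card F : ℂ) ≠ 0 := Nat.cast_ne_zero.mpr Fintype.card_ne_zero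
  have hmem : ∀ M ∈ S', M.det = (t : F) ∧ ∃ i j : Fin n, i < j ∧ M j i ≠ 0 := by
    intro M hM
    simpa only [hS', hP, Finset.mem_filter, Finset.mem_univ, true_and] using hM
  have key : (Fintype.card F : ℂ) * ∑ M ∈ S', (ψ (Matrix.trace M) : ℂ) = 0 := by
    calc (Fintype.card F : ℂ) * ∑ M ∈ S', (ψ (Matrix.trace M) : ℂ)
        = ∑ _c : F, ∑ M ∈ S', (ψ (Matrix.trace M) : ℂ) := by
          rw [Finset.sum_const, Finset.card_univ, nsmul_eq_mul]
      _ = ∑ c : F, ∑ M ∈ S',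
            (ψ (Matrix.trace M) : ℂ) *
              (ψ (c * M (bkPick hn0 M).2 (bkPick hn0 M).1) : ℂ) := by
          refine Finset.sum_congr rfl fun c _ => Eq.symm ?_
          refine Finset.sum_bij'
            (fun M _ => M * Matrix.transvection (bkPick hn0 M).1 (bkPick hn0 M).2 c)
            (fun N _ => N * Matrix.transvection (bkPick hn0 N).1 (bkPick hn0 N).2 (-c))
            ?_ ?_ ?_ ?_ ?_
          · intro M hM
            simp only [hS', hP, Finset.mem_filter, Finset.mem_univ, true_and]
            exact (bk_step hn0 t (hmem M hM) c).1
          · intro N hN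
            simp only [hS', hP, Finset.mem_filter, Finset.mem_univ, true_and]
            exact (bk_step hn0 t (hmem N hN) (-c)).1
          · intro M hM
            exact (bk_step hn0 t (hmem M hM) c).2.1
          · intro N hN
            have h := (bk_step hn0 t (hmem N hN) (-c)).2.1
            rwa [neg_neg] at h
          · intro M hM
            rw [(bk_step hn0 t (hmem M hM) c).2.2.1, hψ, Units.val_mul]
      _ = ∑ M ∈ S', (ψ (Matrix.trace M) : ℂ) *
            ∑ c : F, (ψ (c * M (bkPick hn0 M).2 (bkPick hn0 M).1) : ℂ) := by
          rw [Finset.sum_comm]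
          exact Finset.sum_congr rfl fun M _ => (Finset.mul_sum _ _ _).symm
      _ = 0 := by
          refine Finset.sum_eq_zero fun M hM => ?_
          have hne := (bk_step hn0 t (hmem M hM) 0).2.2.2
          rw [bk9_sum_psi_mul ψ hψ hnt hne, mul_zero]
  exact (mul_eq_zero.mp key).resolve_left hq
end

section
/- Let F_q be a finite field with q elements, ψ : F_q → ℂˣ a nontrivial additive character, and n ≥ 1. Then Σ_{g ∈ GL_n(F_q)} ψ(Tr g) = (-1)^n · q^{n(n-1)/2}. -/
open scoped Classical

open Finset

section Aux

variable {F : Type*} [Field F] [Fintype F] (Ψ : F → ℂ)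

private lemma aux_psi_sum (hmul : ∀ a b : F, Ψ (a + b) = Ψ a * Ψ b)
    (hnt : ∃ a : F, Ψ a ≠ 1) : ∑ a : F, Ψ a = 0 := by
  obtain ⟨b, hb⟩ := hnt
  have h1 : ∑ a : F, Ψ (a + b) = ∑ a : F, Ψ a :=
    Fintype.sum_equiv (Equiv.addRight b) _ _ (fun a => rfl)
  have h2 : ∑ a : F, Ψ (a + b) = (∑ a : F, Ψ a) * Ψ b := by
    rw [Finset.sum_mul]; exact Finset.sum_congr rfl fun a _ => hmul a b
  have h3 : (∑ a : F, Ψ a) * (Ψ b - 1) = 0 := by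
    rw [mul_sub, mul_one, ← h2, h1, sub_self]
  rcases mul_eq_zero.mp h3 with h | h
  · exact h
  · exact absurd (sub_eq_zero.mp h) hb

private lemma aux_psi_finsum (h0 : Ψ 0 = 1) (hmul : ∀ a b : F, Ψ (a + b) = Ψ a * Ψ b)
    {ι : Type*} (s : Finset ι) (f : ι → F) : Ψ (∑ i ∈ s, f i) = ∏ i ∈ s, Ψ (f i) := by
  induction s using Finset.cons_induction with
  | empty => simpa
  | cons a s ha ih => rw [Finset.sum_cons, Finset.prod_cons, hmul, ih]

private lemma aux_psi_mul_sum (h0 : Ψ 0 = 1) (hmul : ∀ a b : F, Ψ (a + b) = Ψ a * Ψ b)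
    (hnt : ∃ a : F, Ψ a ≠ 1) (b : F) :
    ∑ t : F, Ψ (t * b) = if b = 0 then (Fintype.card F : ℂ) else 0 := by
  by_cases hb : b = 0
  · simp [hb, h0]
  · rw [if_neg hb, ← aux_psi_sum Ψ hmul hnt]
    exact Fintype.sum_equiv (Equiv.mulRight₀ b hb) _ _ (fun a => rfl)

private noncomputable def auxS (n : ℕ) : ℂ :=
  ∑ v : Fin n → Fin n → F, if LinearIndependent F v then Ψ (∑ i, v i i) else 0

private lemma auxS_zero (h0 : Ψ 0 = 1) : auxS Ψ 0 = 1 := by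
  rw [auxS]
  rw [Fintype.sum_unique]
  rw [if_pos (linearIndependent_empty_type)]
  simp [h0]

end Aux

section Aux2

variable {F : Type*} [Field F] [Fintype F] (Ψ : F → ℂ)

private lemma aux_col_sum (hmul : ∀ a b : F, Ψ (a + b) = Ψ a * Ψ b)
    (hnt : ∃ a : F, Ψ a ≠ 1) (n : ℕ) :
    ∑ c : Fin (n+1) → F, Ψ (c (Fin.last n)) = 0 := by
  rw [← Equiv.sum_comp (Fin.snocEquiv (fun _ : Fin (n+1) => F))]
  simp only [Fin.snocEquiv, Equiv.coe_fn_mk, Fin.snoc_last]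
  rw [Fintype.sum_prod_type, Finset.sum_comm]
  simp [aux_psi_sum Ψ hmul hnt]

private lemma auxT_zero (hmul : ∀ a b : F, Ψ (a + b) = Ψ a * Ψ b)
    (hnt : ∃ a : F, Ψ a ≠ 1) (n : ℕ) :
    ∑ w : Fin (n+1) → Fin (n+1) → F,
      (if LinearIndependent F (Fin.init w) then Ψ (∑ i, w i i) else 0) = 0 := by
  rw [← Equiv.sum_comp (Fin.snocEquiv (fun _ : Fin (n+1) => Fin (n+1) → F))]
  have key : ∀ p : (Fin (n+1) → F) × (Fin n → Fin (n+1) → F),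
      (if LinearIndependent F (Fin.init ((Fin.snocEquiv (fun _ : Fin (n+1) => Fin (n+1) → F)) p))
        then Ψ (∑ i, (Fin.snocEquiv (fun _ : Fin (n+1) => Fin (n+1) → F)) p i i) else 0)
      = (if LinearIndependent F p.2 then Ψ (∑ i : Fin n, p.2 i i.castSucc) else 0) *
          Ψ (p.1 (Fin.last n)) := by
    intro p
    have h1 : Fin.init ((Fin.snocEquiv (fun _ : Fin (n+1) => Fin (n+1) → F)) p) = p.2 := by
      simp only [Fin.snocEquiv, Equiv.coe_fn_mk, Fin.init_snoc]
    have h2 : (∑ i, (Fin.snocEquiv (fun _ : Fin (n+1) => Fin (n+1) → F)) p i i)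
        = (∑ i : Fin n, p.2 i i.castSucc) + p.1 (Fin.last n) := by
      rw [Fin.sum_univ_castSucc]
      simp only [Fin.snocEquiv, Equiv.coe_fn_mk, Fin.snoc_castSucc, Fin.snoc_last]
    rw [h1, h2]
    by_cases h : LinearIndependent F p.2
    · rw [if_pos h, if_pos h, hmul]
    · rw [if_neg h, if_neg h, zero_mul]
  rw [Fintype.sum_congr _ _ key, Fintype.sum_prod_type]
  simp only [← Finset.sum_mul]
  rw [← Finset.mul_sum, aux_col_sum Ψ hmul hnt n, mul_zero]

end Aux2

section Aux3

variable {F : Type*} [Field F] [Fintype F] (Ψ : F → ℂ)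

private lemma aux_split (n : ℕ) (w : Fin (n+1) → Fin (n+1) → F) :
    (if LinearIndependent F (Fin.init w) then Ψ (∑ i, w i i) else 0)
    = (if LinearIndependent F w then Ψ (∑ i, w i i) else 0)
      + (if (LinearIndependent F (Fin.init w) ∧
          w (Fin.last n) ∈ Submodule.span F (Set.range (Fin.init w))) then
            Ψ (∑ i, w i i) else 0) := by
  by_cases h1 : LinearIndependent F (Fin.init w)
  · by_cases h2 : w (Fin.last n) ∈ Submodule.span F (Set.range (Fin.init w))
    · rw [if_pos h1, if_neg, if_pos ⟨h1, h2⟩, zero_add]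
      rw [linearIndependent_fin_succ']
      exact fun h => h.2 h2
    · rw [if_pos h1, if_pos (linearIndependent_fin_succ'.mpr ⟨h1, h2⟩),
        if_neg (fun h => h2 h.2), add_zero]
  · rw [if_neg h1, if_neg, if_neg (fun h => h1 h.1), add_zero]
    rw [linearIndependent_fin_succ']
    exact fun h => h1 h.1

private lemma auxU (h0 : Ψ 0 = 1) (hmul : ∀ a b : F, Ψ (a + b) = Ψ a * Ψ b)
    (hnt : ∃ a : F, Ψ a ≠ 1) (n : ℕ) :
    ∑ w : Fin (n+1) → Fin (n+1) → F,
      (if (LinearIndependent F (Fin.init w) ∧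
          w (Fin.last n) ∈ Submodule.span F (Set.range (Fin.init w))) then
            Ψ (∑ i, w i i) else 0)
    = (Fintype.card F : ℂ) ^ n *
      ∑ u : Fin n → Fin (n+1) → F,
        (if (LinearIndependent F u ∧ ∀ j, u j (Fin.last n) = 0)
          then Ψ (∑ i : Fin n, u i i.castSucc) else 0) := by
  rw [← Equiv.sum_comp (Fin.snocEquiv (fun _ : Fin (n+1) => Fin (n+1) → F))]
  have key : ∀ p : (Fin (n+1) → F) × (Fin n → Fin (n+1) → F),
      (if (LinearIndependent F
            (Fin.init ((Fin.snocEquiv (fun _ : Fin (n+1) => Fin (n+1) → F)) p)) ∧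
          ((Fin.snocEquiv (fun _ : Fin (n+1) => Fin (n+1) → F)) p) (Fin.last n) ∈
            Submodule.span F (Set.range
              (Fin.init ((Fin.snocEquiv (fun _ : Fin (n+1) => Fin (n+1) → F)) p)))) then
        Ψ (∑ i, ((Fin.snocEquiv (fun _ : Fin (n+1) => Fin (n+1) → F)) p) i i) else 0)
      = (if (LinearIndependent F p.2 ∧ p.1 ∈ Submodule.span F (Set.range p.2)) then
          Ψ ((∑ i : Fin n, p.2 i i.castSucc) + p.1 (Fin.last n)) else 0) := by
    intro p
    have h1 : Fin.init ((Fin.snocEquiv (fun _ : Fin (n+1) => Fin (n+1) → F)) p) = p.2 := by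
      simp only [Fin.snocEquiv, Equiv.coe_fn_mk, Fin.init_snoc]
    have h2 : (∑ i, (Fin.snocEquiv (fun _ : Fin (n+1) => Fin (n+1) → F)) p i i)
        = (∑ i : Fin n, p.2 i i.castSucc) + p.1 (Fin.last n) := by
      rw [Fin.sum_univ_castSucc]
      simp only [Fin.snocEquiv, Equiv.coe_fn_mk, Fin.snoc_castSucc, Fin.snoc_last]
    have h3 : ((Fin.snocEquiv (fun _ : Fin (n+1) => Fin (n+1) → F)) p) (Fin.last n) = p.1 := by
      simp only [Fin.snocEquiv, Equiv.coe_fn_mk, Fin.snoc_last]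
    rw [h1, h2, h3]
  rw [Fintype.sum_congr _ _ key, Fintype.sum_prod_type, Finset.sum_comm, Finset.mul_sum]
  refine Finset.sum_congr rfl fun u _ => ?_
  by_cases hu : LinearIndependent F u
  · simp only [hu, true_and]
    rw [← Finset.sum_filter]
    have himg : Finset.univ.filter (fun c : Fin (n+1) → F => c ∈ Submodule.span F (Set.range u))
        = Finset.image (fun x : Fin n → F => ∑ j, x j • u j) Finset.univ := by
      ext c
      simp only [Finset.mem_filter, Finset.mem_univ, true_and, Finset.mem_image]
      rw [Submodule.mem_span_range_iff_exists_fun]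
    have hinj : ∀ x ∈ (Finset.univ : Finset (Fin n → F)), ∀ y ∈ Finset.univ,
        (∑ j, x j • u j) = (∑ j, y j • u j) → x = y := by
      intro x _ y _ hxy
      have hz : ∑ i, (x i - y i) • u i = 0 := by
        simp only [sub_smul, Finset.sum_sub_distrib, hxy, sub_self]
      have hxy2 := Fintype.linearIndependent_iff.mp hu (fun i => x i - y i) hz
      funext j
      have := hxy2 j
      rwa [sub_eq_zero] at this
    rw [himg, Finset.sum_image hinj]
    have hterm : ∀ x : Fin n → F,
        Ψ ((∑ i : Fin n, u i i.castSucc) + (∑ j, x j • u j) (Fin.last n))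
        = Ψ (∑ i : Fin n, u i i.castSucc) * ∏ j, Ψ (x j * u j (Fin.last n)) := by
      intro x
      have happ : (∑ j, x j • u j) (Fin.last n) = ∑ j, x j * u j (Fin.last n) := by
        simp [Finset.sum_apply]
      rw [happ, hmul]
      congr 1
      exact aux_psi_finsum Ψ h0 hmul _ _
    simp only [hterm]
    rw [← Finset.mul_sum, ← Fintype.prod_sum (fun j t => Ψ (t * u j (Fin.last n)))]
    have hfac : ∀ j : Fin n, (∑ t : F, Ψ (t * u j (Fin.last n)))
        = if u j (Fin.last n) = 0 then (Fintype.card F : ℂ) else 0 :=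
      fun j => aux_psi_mul_sum Ψ h0 hmul hnt _
    rw [Finset.prod_congr rfl (fun j _ => hfac j)]
    by_cases hb : ∀ j, u j (Fin.last n) = 0
    · simp only [hb, if_pos, if_true]
      simp [Finset.prod_const, mul_comm]
    · obtain ⟨j, hj⟩ := not_forall.mp hb
      have hz : (∏ j : Fin n, if u j (Fin.last n) = 0 then (Fintype.card F : ℂ) else 0) = 0 :=
        Finset.prod_eq_zero (Finset.mem_univ j)
          (if_neg hj : (if u j (Fin.last n) = 0 then ((Fintype.card F : ℂ)) else 0) = 0)
      rw [hz, if_neg hb]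
      ring
  · simp [hu]

end Aux3

section Aux4

variable {F : Type*} [Field F] [Fintype F] (Ψ : F → ℂ)

private def auxL (F : Type*) [Field F] (n : ℕ) : (Fin n → F) →ₗ[F] (Fin (n+1) → F) where
  toFun y := Fin.snoc y 0
  map_add' y z := by
    funext i
    refine Fin.lastCases ?_ (fun i => ?_) i
    · simp
    · simp
  map_smul' c y := by
    funext i
    refine Fin.lastCases ?_ (fun i => ?_) i
    · simp
    · simp

private lemma auxL_inj (F : Type*) [Field F] (n : ℕ) : Function.Injective (auxL F n) := by
  intro y z h
  have h2 := congrArg Fin.init h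
  simpa [auxL, Fin.init_snoc] using h2

private lemma auxD (n : ℕ) :
    ∑ u : Fin n → Fin (n+1) → F,
      (if (LinearIndependent F u ∧ ∀ j, u j (Fin.last n) = 0)
        then Ψ (∑ i : Fin n, u i i.castSucc) else 0)
    = auxS Ψ n := by
  rw [auxS, ← Finset.sum_filter, ← Finset.sum_filter]
  refine Finset.sum_nbij' (fun u => fun j => Fin.init (u j))
    (fun v => fun j => Fin.snoc (v j) (0 : F)) ?_ ?_ ?_ ?_ ?_
  · intro u hu
    rw [Finset.mem_filter] at hu ⊢
    obtain ⟨-, hLI, hz⟩ := hu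
    refine ⟨Finset.mem_univ _, ?_⟩
    have hcomp : u = (auxL F n) ∘ (fun j => Fin.init (u j)) := by
      funext j
      show u j = Fin.snoc (Fin.init (u j)) 0
      rw [← hz j, Fin.snoc_init_self]
    exact LinearIndependent.of_comp (auxL F n) (hcomp ▸ hLI)
  · intro v hv
    rw [Finset.mem_filter] at hv ⊢
    refine ⟨Finset.mem_univ _, ?_, fun j => Fin.snoc_last _ _⟩
    have : LinearIndependent F ((auxL F n) ∘ v) :=
      hv.2.map' (auxL F n) (LinearMap.ker_eq_bot.mpr (auxL_inj F n))
    exact this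
  · intro u hu
    rw [Finset.mem_filter] at hu
    funext j
    show Fin.snoc (Fin.init (u j)) (0:F) = u j
    rw [← hu.2.2 j, Fin.snoc_init_self]
  · intro v _
    funext j
    exact Fin.init_snoc _ _
  · intro u _
    congr 1

private lemma auxS_succ (h0 : Ψ 0 = 1) (hmul : ∀ a b : F, Ψ (a + b) = Ψ a * Ψ b)
    (hnt : ∃ a : F, Ψ a ≠ 1) (n : ℕ) :
    auxS Ψ (n+1) = -((Fintype.card F : ℂ) ^ n) * auxS Ψ n := by
  have hT := auxT_zero Ψ hmul hnt n
  have hsplit : (∑ w : Fin (n+1) → Fin (n+1) → F,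
      (if LinearIndependent F (Fin.init w) then Ψ (∑ i, w i i) else 0))
      = auxS Ψ (n+1) + ∑ w : Fin (n+1) → Fin (n+1) → F,
        (if (LinearIndependent F (Fin.init w) ∧
            w (Fin.last n) ∈ Submodule.span F (Set.range (Fin.init w))) then
              Ψ (∑ i, w i i) else 0) := by
    rw [auxS, ← Finset.sum_add_distrib]
    exact Finset.sum_congr rfl fun w _ => aux_split Ψ n w
  rw [hsplit, auxU Ψ h0 hmul hnt n, auxD Ψ n] at hT
  linear_combination hT

private lemma auxS_closed (h0 : Ψ 0 = 1) (hmul : ∀ a b : F, Ψ (a + b) = Ψ a * Ψ b)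
    (hnt : ∃ a : F, Ψ a ≠ 1) (n : ℕ) :
    auxS Ψ n = (-1:ℂ)^n * (Fintype.card F : ℂ) ^ (n * (n-1) / 2) := by
  induction n with
  | zero => simp [auxS_zero Ψ h0]
  | succ n ih =>
    rw [auxS_succ Ψ h0 hmul hnt n, ih]
    have hexp : (n+1) * ((n+1) - 1) / 2 = n * (n-1)/2 + n := by
      have h1 : ∀ m : ℕ, m * (m-1)/2 = ∑ i ∈ Finset.range m, i := fun m =>
        (Finset.sum_range_id m).symm
      rw [h1, h1, Finset.sum_range_succ]
    rw [hexp, pow_add, pow_succ]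
    ring

end Aux4

/-- For a nontrivial additive character `ψ` of a finite field `F_q`
and `n ≥ 1`, `Σ_{g ∈ GL_n(F_q)} ψ(Tr g) = (-1)^n · q^{n(n-1)/2}`. -/
theorem braverman_kazhdan_stmt10 {F : Type*} [Field F] [Fintype F]
    (ψ : F → ℂˣ) (hψ : ∀ a b : F, ψ (a + b) = ψ a * ψ b)
    (hnt : ∃ a : F, ψ a ≠ 1)
    (n : ℕ) (hn : 1 ≤ n) :
    ∑ g : GL (Fin n) F, (ψ (Matrix.trace (g : Matrix (Fin n) (Fin n) F)) : ℂ) =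
      (-1 : ℂ) ^ n * (Fintype.card F : ℂ) ^ (n * (n - 1) / 2) := by
  set Ψ : F → ℂ := fun a => ((ψ a : ℂˣ) : ℂ) with hΨ
  have hpsi0 : ψ 0 = 1 := by
    have h : ψ 0 * ψ 0 = ψ 0 * 1 := by rw [mul_one, ← hψ, add_zero]
    exact mul_left_cancel h
  have h0 : Ψ 0 = 1 := by rw [hΨ]; simp [hpsi0]
  have hmul : ∀ a b : F, Ψ (a + b) = Ψ a * Ψ b := fun a b => by
    simp only [hΨ, hψ, Units.val_mul]
  have hntC : ∃ a : F, Ψ a ≠ 1 := by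
    obtain ⟨a, ha⟩ := hnt
    exact ⟨a, fun h => ha (Units.val_eq_one.mp h)⟩
  have h1 : ∑ g : GL (Fin n) F, Ψ (Matrix.trace (g : Matrix (Fin n) (Fin n) F))
      = ∑ M ∈ Finset.univ.filter (fun M : Matrix (Fin n) (Fin n) F => IsUnit M),
          Ψ (Matrix.trace M) := by
    refine Finset.sum_nbij' (fun g => (g : Matrix (Fin n) (Fin n) F))
      (fun M => if h : IsUnit M then h.unit else 1) ?_ ?_ ?_ ?_ ?_
    · intro g _
      exact Finset.mem_filter.mpr ⟨Finset.mem_univ _, g.isUnit⟩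
    · intro M _
      exact Finset.mem_univ _
    · intro g _
      show (if h : IsUnit ((g : Matrix (Fin n) (Fin n) F)) then h.unit else 1) = g
      rw [dif_pos g.isUnit]
      exact Units.ext (IsUnit.unit_spec _)
    · intro M hM
      show (((if h : IsUnit M then h.unit else 1) : GL (Fin n) F) : Matrix (Fin n) (Fin n) F) = M
      rw [dif_pos ((Finset.mem_filter.mp hM).2)]
      exact IsUnit.unit_spec _
    · intro g _
      rfl
  have h2 : ∑ M ∈ Finset.univ.filter (fun M : Matrix (Fin n) (Fin n) F => IsUnit M),
      Ψ (Matrix.trace M) = auxS Ψ n := by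
    rw [auxS, ← Finset.sum_filter]
    refine Finset.sum_nbij' (fun M => (fun i j => M i j : Fin n → Fin n → F))
      (fun v => Matrix.of v) ?_ ?_ ?_ ?_ ?_
    · intro M hM
      rw [Finset.mem_filter] at hM ⊢
      refine ⟨Finset.mem_univ _, ?_⟩
      exact Matrix.linearIndependent_rows_iff_isUnit.mpr hM.2
    · intro v hv
      rw [Finset.mem_filter] at hv ⊢
      exact ⟨Finset.mem_univ _, Matrix.linearIndependent_rows_iff_isUnit.mp hv.2⟩
    · intro M _; rfl
    · intro v _; rfl
    · intro M _
      simp [Matrix.trace, Matrix.diag]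
  rw [h1, h2, auxS_closed Ψ h0 hmul hntC n]
end
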